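/- arXiv:1306.4041 — 3 statements merged into one kernel-verified Lean document; each statement's English description precedes it below -/
import Mathlib

section
/- Let w1 and w2 be continuous real-valued functions on [0,1]. Then sup_{x ∈ [0,1]} |P_{w1}(x) − P_{w2}(x)| ≤ sup_{x ∈ [0,1]} |w1(x) − w2(x)|, i.e., the isotonic projection operator is a contraction with respect to the supremum norm. -/
/-!
For `C = sup |w₁ - w₂|`, the means of `w₁` and `w₂` over any interval `[u, v] ⊆ [0, 1]` differ
by at most `C`, and a uniform bound `f ≤ g + C` survives taking a supremum over `u` and then an
infimum over `v`. Continuity makes all these means bounded, so that the conditionally complete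
suprema and infima in `isoProj` are the genuine ones.
-/

open MeasureTheory Set

/-- The isotonic projection of a function `w : [0,1] → ℝ`:
`P_w(x) = inf_{v : x ≤ v ≤ 1} sup_{u : 0 ≤ u ≤ x, u < v} (1/(v−u)) ∫_u^v w(t) dt`. -/
noncomputable def isoProj (w : ℝ → ℝ) (x : ℝ) : ℝ :=
  sInf {y : ℝ | ∃ v : ℝ, x ≤ v ∧ v ≤ 1 ∧
    y = sSup {z : ℝ | ∃ u : ℝ, 0 ≤ u ∧ u ≤ x ∧ u < v ∧
      z = (v - u)⁻¹ * ∫ t in u..v, w t}}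

section
variable {α : Type*} {s : Set α} {f g : α → ℝ} {C : ℝ}

-- `C ≥ 0` covers an empty `s`, where both suprema are `sSup ∅ = 0`.
theorem Real.sSup_image_le_sSup_image_add (hC : 0 ≤ C) (hg : BddAbove (g '' s))
    (h : ∀ a ∈ s, f a ≤ g a + C) : sSup (f '' s) ≤ sSup (g '' s) + C := by
  rcases s.eq_empty_or_nonempty with rfl | hs
  · simpa using hC
  refine csSup_le (hs.image f) ?_
  rintro _ ⟨a, ha, rfl⟩
  exact (h a ha).trans (add_le_add_left (le_csSup hg (mem_image_of_mem g ha)) C)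

theorem Real.sInf_image_le_sInf_image_add (hs : s.Nonempty) (hf : BddBelow (f '' s))
    (h : ∀ a ∈ s, f a ≤ g a + C) : sInf (f '' s) ≤ sInf (g '' s) + C := by
  rw [← sub_le_iff_le_add]
  refine le_csInf (hs.image g) ?_
  rintro _ ⟨a, ha, rfl⟩
  rw [sub_le_iff_le_add]
  exact (csInf_le hf (mem_image_of_mem f ha)).trans (h a ha)

end

theorem interval_average_le_interval_average_add {f g : ℝ → ℝ} {a b C : ℝ} (hab : a < b)
    (hf : IntervalIntegrable f volume a b) (hg : IntervalIntegrable g volume a b)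
    (h : ∀ t ∈ Icc a b, f t ≤ g t + C) : ⨍ t in a..b, f t ≤ (⨍ t in a..b, g t) + C := by
  have hba : 0 < b - a := sub_pos.2 hab
  have hint : ∫ t in a..b, f t ≤ (∫ t in a..b, g t) + (b - a) * C := by
    calc ∫ t in a..b, f t ≤ ∫ t in a..b, (g t + C) :=
          intervalIntegral.integral_mono_on hab.le hf (hg.add intervalIntegrable_const) h
      _ = (∫ t in a..b, g t) + (b - a) * C := by
          rw [intervalIntegral.integral_add hg intervalIntegrable_const,
            intervalIntegral.integral_const, smul_eq_mul]
  rw [interval_average_eq, interval_average_eq, smul_eq_mul, smul_eq_mul]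
  calc (b - a)⁻¹ * ∫ t in a..b, f t ≤ (b - a)⁻¹ * ((∫ t in a..b, g t) + (b - a) * C) :=
        mul_le_mul_of_nonneg_left hint (inv_nonneg.2 hba.le)
    _ = _ := by field_simp

noncomputable def maxMean (w : ℝ → ℝ) (x v : ℝ) : ℝ :=
  sSup ((fun u => ⨍ t in u..v, w t) '' {u | 0 ≤ u ∧ u ≤ x ∧ u < v})

theorem isoProj_eq_sInf_maxMean (w : ℝ → ℝ) (x : ℝ) :
    isoProj w x = sInf (maxMean w x '' Icc x 1) := by
  have hmean (v : ℝ) : maxMean w x v = sSup {z : ℝ | ∃ u : ℝ, 0 ≤ u ∧ u ≤ x ∧ u < v ∧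
      z = (v - u)⁻¹ * ∫ t in u..v, w t} := by
    simp only [maxMean, interval_average_eq, smul_eq_mul]
    congr 1
    ext z
    simp [eq_comm, and_assoc]
  simp only [isoProj, hmean]
  congr 1
  ext y
  simp [eq_comm, and_assoc]

section
variable {w w₁ w₂ : ℝ → ℝ} {x v C : ℝ}

theorem interval_average_le_add_of_continuousOn {s : Set ℝ} (hw₁ : ContinuousOn w₁ s)
    (hw₂ : ContinuousOn w₂ s) (h : ∀ t ∈ s, w₁ t ≤ w₂ t + C) {u : ℝ} (huv : u < v)
    (hs : Icc u v ⊆ s) : ⨍ t in u..v, w₁ t ≤ (⨍ t in u..v, w₂ t) + C := by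
  rw [← uIcc_of_le huv.le] at hs
  exact interval_average_le_interval_average_add huv (hw₁.mono hs).intervalIntegrable
    (hw₂.mono hs).intervalIntegrable fun t ht => h t (hs (Icc_subset_uIcc ht))

theorem IsCompact.exists_nonneg_abs_bound_of_continuousOn {s : Set ℝ} (hs : IsCompact s)
    (hw : ContinuousOn w s) : ∃ M, 0 ≤ M ∧ ∀ t ∈ s, |w t| ≤ M := by
  obtain ⟨M, hM⟩ := hs.exists_bound_of_continuousOn hw
  exact ⟨max M 0, le_max_right M 0, fun t ht => (hM t ht).trans (le_max_left M 0)⟩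

theorem bddAbove_interval_averages (hw : ContinuousOn w (Icc 0 1)) (hv : v ≤ 1) :
    BddAbove ((fun u => ⨍ t in u..v, w t) '' {u | 0 ≤ u ∧ u ≤ x ∧ u < v}) := by
  obtain ⟨M, -, hM⟩ := isCompact_Icc.exists_nonneg_abs_bound_of_continuousOn hw
  refine ⟨M, ?_⟩
  rintro _ ⟨u, ⟨hu, -, huv⟩, rfl⟩
  simpa using interval_average_le_add_of_continuousOn (w₂ := fun _ => 0) (C := M) hw
    continuousOn_const (fun t ht => by simpa using (abs_le.1 (hM t ht)).2) huv
    (Icc_subset_Icc hu hv)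

theorem maxMean_le_maxMean_add (hC : 0 ≤ C) (hw₁ : ContinuousOn w₁ (Icc 0 1))
    (hw₂ : ContinuousOn w₂ (Icc 0 1)) (h : ∀ t ∈ Icc (0 : ℝ) 1, w₁ t ≤ w₂ t + C)
    (hv : v ≤ 1) : maxMean w₁ x v ≤ maxMean w₂ x v + C :=
  Real.sSup_image_le_sSup_image_add hC (bddAbove_interval_averages hw₂ hv)
    fun _ ⟨hu, _, huv⟩ =>
      interval_average_le_add_of_continuousOn hw₁ hw₂ h huv (Icc_subset_Icc hu hv)

theorem bddBelow_maxMean (hw : ContinuousOn w (Icc 0 1)) :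
    BddBelow (maxMean w x '' Icc x 1) := by
  obtain ⟨M, hM0, hM⟩ := isCompact_Icc.exists_nonneg_abs_bound_of_continuousOn hw
  refine ⟨-M, ?_⟩
  rintro _ ⟨v, hv, rfl⟩
  have hzero : 0 ≤ maxMean (fun _ => 0) x v :=
    Real.sSup_nonneg fun _ ⟨u, _, hz⟩ => by simp [← hz]
  have := maxMean_le_maxMean_add (w₁ := fun _ => 0) (x := x) hM0 continuousOn_const hw
    (fun t ht => by linarith [(abs_le.1 (hM t ht)).1]) hv.2
  linarith

theorem isoProj_le_isoProj_add (hC : 0 ≤ C) (hw₁ : ContinuousOn w₁ (Icc 0 1))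
    (hw₂ : ContinuousOn w₂ (Icc 0 1)) (h : ∀ t ∈ Icc (0 : ℝ) 1, w₁ t ≤ w₂ t + C)
    (hx : x ≤ 1) : isoProj w₁ x ≤ isoProj w₂ x + C := by
  rw [isoProj_eq_sInf_maxMean, isoProj_eq_sInf_maxMean]
  exact Real.sInf_image_le_sInf_image_add (nonempty_Icc.2 hx) (bddBelow_maxMean hw₁)
    fun _ hv => maxMean_le_maxMean_add hC hw₁ hw₂ h hv.2

end

/-- The isotonic projection is a contraction for the supremum norm on `[0,1]`. -/
theorem isoProj_sup_contraction (w₁ w₂ : ℝ → ℝ)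
    (hw₁ : ContinuousOn w₁ (Icc 0 1)) (hw₂ : ContinuousOn w₂ (Icc 0 1)) :
    ⨆ x : Icc (0:ℝ) 1, |isoProj w₁ x - isoProj w₂ x| ≤
      ⨆ x : Icc (0:ℝ) 1, |w₁ x - w₂ x| := by
  have hbdd : BddAbove (range fun x : Icc (0:ℝ) 1 => |w₁ x - w₂ x|) := by
    rw [← image_eq_range (fun t => |w₁ t - w₂ t|)]
    exact (isCompact_Icc.image_of_continuousOn (hw₁.sub hw₂).abs).bddAbove
  set C := ⨆ x : Icc (0:ℝ) 1, |w₁ x - w₂ x|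
  have hC (t : ℝ) (ht : t ∈ Icc (0:ℝ) 1) : |w₁ t - w₂ t| ≤ C := le_ciSup hbdd ⟨t, ht⟩
  have hC0 : 0 ≤ C := (abs_nonneg _).trans (hC 0 (left_mem_Icc.2 zero_le_one))
  have : Nonempty (Icc (0:ℝ) 1) := ⟨⟨0, left_mem_Icc.2 zero_le_one⟩⟩
  refine ciSup_le fun x => abs_sub_le_iff.2 ⟨?_, ?_⟩
  · have := isoProj_le_isoProj_add hC0 hw₁ hw₂
      (fun t ht => by linarith [(abs_sub_le_iff.1 (hC t ht)).1]) x.2.2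
    linarith
  · have := isoProj_le_isoProj_add hC0 hw₂ hw₁
      (fun t ht => by linarith [(abs_sub_le_iff.1 (hC t ht)).2]) x.2.2
    linarith
end

section
/- Let w : [0,1] → ℝ be continuous. Then the isotonic projection P_w minimizes the L² distance to w over the set of continuous nondecreasing functions: for every F ∈ M[0,1], ∫_0^1 (w(t) − P_w(t))² dt ≤ ∫_0^1 (w(t) − F(t))² dt. -/
open MeasureTheory Set

/-!
Write `W x = ∫₀ˣ w`, let `|w| ≤ M` on `[0,1]`, and let `T a` be the last minimizer on `[0,1]` of
the tilted primitive `s ↦ W s - a s`. Comparing window averages with slopes in the definition of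
`isoProj` gives `a < P x → T a < x` and `T a < x → a ≤ P x`: on `(0,1]`, `P = isoProj w` is the
generalized inverse of the nondecreasing map `T`. Slicing the subgraph of `P` horizontally yields
`∫₀ˣ P = M x - ∫_{-M}^M min (T a) x da`, and the envelope theorem for the minimum values yields
`W x = M x - ∫_{-M}^M Tₓ a da`, where `Tₓ a ≤ min (T a) x` is the last minimizer on `[0,x]`.
Hence `D x = ∫₀ˣ (w - P)` is nonnegative and vanishes at `1` and at every contact point `T c`.

For monotone `g` with values in `[b, B]`, Fubini applied to `g t - b = ∫_b^B 1[c < g t] dc` gives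
`∫₀¹ (w - P)(g - b) = ∫_b^B ∫_{g > c} (w - P) dc`. Each superlevel set is an interval `(s_c, 1]`
up to a null set, so the inner integral is `D 1 - D s_c = -D s_c ≤ 0`; for `g = P` it is `(T c, 1]`
for almost every `c`, so the inner integrals vanish. Hence `∫ (w - P)(P - F) ≥ 0`, and expanding
`(w - F)² = ((w - P) + (P - F))²` concludes.
-/

open Filter Topology Finset in
theorem eq_of_abs_sub_le_mul_sub {E G : ℝ → ℝ} {a b : ℝ} (hab : a ≤ b)
    (hE : ∀ u ∈ Icc a b, ∀ v ∈ Icc a b, u ≤ v → |E v - E u| ≤ (G v - G u) * (v - u)) :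
    E a = E b := by
  have hmesh : ∀ n : ℕ, 0 < n → |E b - E a| ≤ (G b - G a) * (b - a) / n := by
    intro n hn
    have hn' : (n : ℝ) ≠ 0 := by positivity
    set δ := (b - a) / n
    set p : ℕ → ℝ := fun i => a + i * δ
    have hδ : 0 ≤ δ := div_nonneg (sub_nonneg.2 hab) n.cast_nonneg
    have hp0 : p 0 = a := by simp [p]
    have hpn : p n = b := by simp only [p, δ]; field_simp; ring
    have hp : ∀ i ≤ n, p i ∈ Icc a b := fun i hi =>
      ⟨le_add_of_nonneg_right (by positivity), hpn ▸ by
        simp only [p]; gcongr⟩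
    have hstep : ∀ i, p (i + 1) - p i = δ := fun i => by simp only [p]; push_cast; ring
    calc |E b - E a| = |∑ i ∈ range n, (E (p (i + 1)) - E (p i))| := by
          rw [sum_range_sub (fun i => E (p i)), hp0, hpn]
      _ ≤ ∑ i ∈ range n, |E (p (i + 1)) - E (p i)| := abs_sum_le_sum_abs _ _
      _ ≤ ∑ i ∈ range n, (G (p (i + 1)) - G (p i)) * δ := by
          refine sum_le_sum fun i hi => ?_
          have hi := mem_range.1 hi
          rw [← hstep i]
          exact hE _ (hp i hi.le) _ (hp (i + 1) hi) (by linarith [hstep i])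
      _ = (G b - G a) * (b - a) / n := by
          rw [← sum_mul, sum_range_sub (fun i => G (p i)), hp0, hpn, mul_div_assoc]
  have hlim : Tendsto (fun n : ℕ => (G b - G a) * (b - a) / n) atTop (𝓝 0) :=
    tendsto_const_div_atTop_nhds_zero_nat _
  have h0 : |E b - E a| ≤ 0 := ge_of_tendsto hlim (eventually_atTop.2 ⟨1, hmesh⟩)
  linarith [abs_nonpos_iff.1 h0]

theorem sub_eq_integral_of_mul_sub_le {g h : ℝ → ℝ} {a b : ℝ} (hab : a ≤ b)
    (hg : MonotoneOn g (Icc a b))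
    (hlow : ∀ u ∈ Icc a b, ∀ v ∈ Icc a b, u ≤ v → g u * (v - u) ≤ h u - h v)
    (hhigh : ∀ u ∈ Icc a b, ∀ v ∈ Icc a b, u ≤ v → h u - h v ≤ g v * (v - u)) :
    h a - h b = ∫ t in a..b, g t := by
  have hint : ∀ u ∈ Icc a b, ∀ v ∈ Icc a b, IntervalIntegrable g volume u v := fun u hu v hv =>
    (hg.mono (uIcc_subset_Icc hu hv)).intervalIntegrable
  have key := eq_of_abs_sub_le_mul_sub (E := fun v => h v + ∫ t in a..v, g t) (G := g) hab
    fun u hu v hv huv => by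
      have hIcc : Icc u v ⊆ Icc a b := Icc_subset_Icc hu.1 hv.2
      have hlo : g u * (v - u) ≤ ∫ t in u..v, g t := by
        simpa [mul_comm] using intervalIntegral.integral_mono_on huv intervalIntegrable_const
          (hint u hu v hv) fun t ht => hg hu (hIcc ht) ht.1
      have hhi : ∫ t in u..v, g t ≤ g v * (v - u) := by
        simpa [mul_comm] using intervalIntegral.integral_mono_on huv (hint u hu v hv)
          intervalIntegrable_const fun t ht => hg (hIcc ht) hv ht.2
      have hsplit : (∫ t in a..v, g t) - ∫ t in a..u, g t = ∫ t in u..v, g t :=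
        intervalIntegral.integral_interval_sub_left (hint a (left_mem_Icc.2 hab) v hv)
          (hint a (left_mem_Icc.2 hab) u hu)
      rw [abs_le]
      constructor <;> linarith [hlow u hu v hv huv, hhigh u hu v hv huv]
  simp only [intervalIntegral.integral_same, add_zero] at key
  linarith

theorem integral_mul_sub_eq_integral_setIntegral_lt {α : Type*} [MeasurableSpace α]
    {μ : Measure α} [IsFiniteMeasure μ] {h g : α → ℝ} {b B : ℝ} (hbB : b ≤ B)
    (hh : Integrable h μ) (hg : AEMeasurable g μ) (hgb : ∀ᵐ t ∂μ, g t ∈ Icc b B) :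
    ∫ t, h t * (g t - b) ∂μ = ∫ c in b..B, ∫ t in {t | c < g t}, h t ∂μ := by
  obtain ⟨g', hg', hgg'⟩ := hg
  set S : Set (α × ℝ) := {p | p.2 < g' p.1}
  set ν := volume.restrict (Ioc b B)
  have hint : Integrable (S.indicator fun p => h p.1) (μ.prod ν) :=
    (hh.comp_fst ν).indicator (measurableSet_lt measurable_snd (hg'.comp measurable_fst))
  have hinner_c : ∀ t, g' t ∈ Icc b B →
      ∫ c, S.indicator (fun p => h p.1) (t, c) ∂ν = h t * (g' t - b) := by
    intro t ht
    have hind : (fun c => S.indicator (fun p => h p.1) (t, c)) =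
        (Iio (g' t)).indicator fun _ => h t := by
      ext c; simp [S, indicator_apply]
    have hIoo : Iio (g' t) ∩ Ioc b B = Ioo b (g' t) := by
      ext c; simp only [mem_inter_iff, mem_Iio, mem_Ioc, mem_Ioo]
      constructor
      · rintro ⟨h1, h2, _⟩; exact ⟨h2, h1⟩
      · rintro ⟨h1, h2⟩; exact ⟨h2, h1, h2.le.trans ht.2⟩
    rw [hind, integral_indicator_const _ measurableSet_Iio, measureReal_restrict_apply
      measurableSet_Iio, hIoo, Real.volume_real_Ioo, max_eq_left (sub_nonneg.2 ht.1),
      smul_eq_mul, mul_comm]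
  have hinner_t : ∀ c, ∫ t, S.indicator (fun p => h p.1) (t, c) ∂μ =
      ∫ t in {t | c < g t}, h t ∂μ := by
    intro c
    have hind : (fun t => S.indicator (fun p => h p.1) (t, c)) = {t | c < g' t}.indicator h := by
      ext t; simp [S, indicator_apply]
    rw [hind, integral_indicator (measurableSet_lt measurable_const hg')]
    exact setIntegral_congr_set (Filter.eventuallyEq_set.2 (hgg'.mono fun t ht => by
      simp only [mem_ofPred_eq, ht]))
  calc ∫ t, h t * (g t - b) ∂μ = ∫ t, ∫ c, S.indicator (fun p => h p.1) (t, c) ∂ν ∂μ := by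
        refine integral_congr_ae ((hgb.and hgg').mono fun t ht => ?_)
        dsimp only
        rw [hinner_c t (ht.2 ▸ ht.1), ht.2]
    _ = ∫ c, ∫ t, S.indicator (fun p => h p.1) (t, c) ∂μ ∂ν := integral_integral_swap hint
    _ = ∫ c in b..B, ∫ t in {t | c < g t}, h t ∂μ := by
        simp_rw [hinner_t]; rw [intervalIntegral.integral_of_le hbB]

theorem MonotoneOn.exists_setOf_lt_ae_eq_Ioi {g : ℝ → ℝ} {a b : ℝ} (hab : a ≤ b)
    (hg : MonotoneOn g (Ioc a b)) (c : ℝ) :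
    ∃ s ∈ Icc a b, {t | c < g t} =ᵐ[volume.restrict (Ioc a b)] Ioi s := by
  set A := {t ∈ Ioc a b | c < g t}
  -- `b` is inserted so that the infimum is `b` when `g ≤ c` on all of `Ioc a b`.
  have hlb : ∀ t ∈ insert b A, a ≤ t := by rintro t (rfl | ht); exacts [hab, ht.1.1.le]
  have hbdd : BddBelow (insert b A) := ⟨a, hlb⟩
  refine ⟨sInf (insert b A), ⟨le_csInf (insert_nonempty _ _) hlb,
    csInf_le hbdd (mem_insert _ _)⟩, ?_⟩
  rw [Filter.eventuallyEq_set, ae_restrict_iff' measurableSet_Ioc]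
  filter_upwards [(countable_singleton (sInf (insert b A))).ae_notMem volume] with t hts ht
  constructor
  · intro hct
    exact lt_of_le_of_ne (csInf_le hbdd (mem_insert_of_mem _ ⟨ht, hct⟩)) (Ne.symm hts)
  · intro hst
    obtain ⟨u, hu, hut⟩ := exists_lt_of_csInf_lt (insert_nonempty _ _) (mem_Ioi.1 hst)
    rcases hu with rfl | hu
    · exact absurd ht.2 (not_le.2 hut)
    · exact hu.2.trans_le (hg hu.1 ht hut.le)

theorem integral_sq_sub_le_of_integral_mul_nonneg {α : Type*} [MeasurableSpace α]
    {μ : Measure α} {w p q : α → ℝ} (hw : MemLp w 2 μ) (hp : MemLp p 2 μ) (hq : MemLp q 2 μ)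
    (h : 0 ≤ ∫ t, (w t - p t) * (p t - q t) ∂μ) :
    ∫ t, (w t - p t) ^ 2 ∂μ ≤ ∫ t, (w t - q t) ^ 2 ∂μ := by
  have hwp := hw.sub hp
  have hpq := hp.sub hq
  have h1 : Integrable (fun t => (w t - p t) ^ 2) μ := hwp.integrable_sq
  have h2 : Integrable (fun t => 2 * ((w t - p t) * (p t - q t))) μ :=
    (hwp.integrable_mul hpq).const_mul 2
  have h3 : Integrable (fun t => (p t - q t) ^ 2) μ := hpq.integrable_sq
  have hexpand : ∫ t, (w t - q t) ^ 2 ∂μ = ∫ t, (w t - p t) ^ 2 ∂μ +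
      2 * ∫ t, (w t - p t) * (p t - q t) ∂μ + ∫ t, (p t - q t) ^ 2 ∂μ := by
    have h12 : Integrable (fun t => (w t - p t) ^ 2 + 2 * ((w t - p t) * (p t - q t))) μ :=
      h1.add h2
    rw [← integral_const_mul, ← integral_add h1 h2, ← integral_add h12 h3]
    exact integral_congr_ae (Filter.Eventually.of_forall fun t => by dsimp only; ring)
  have hsq : 0 ≤ ∫ t, (p t - q t) ^ 2 ∂μ := integral_nonneg fun t => sq_nonneg _
  linarith

theorem isCompact_setOf_isMinOn {α β : Type*} [TopologicalSpace α] [T2Space α] [LinearOrder β]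
    [TopologicalSpace β] [ClosedIicTopology β] {φ : α → β} {K : Set α} (hK : IsCompact K)
    (hφ : ContinuousOn φ K) : IsCompact {s ∈ K | IsMinOn φ K s} := by
  rcases K.eq_empty_or_nonempty with rfl | hne
  · simp
  obtain ⟨s₀, hs₀, hmin⟩ := hK.exists_isMinOn hne hφ
  have hset : {s ∈ K | IsMinOn φ K s} = K ∩ φ ⁻¹' Iic (φ s₀) := by
    ext s
    refine ⟨fun hs => ⟨hs.1, hs.2 hs₀⟩, fun hs => ⟨hs.1, fun r hr => ?_⟩⟩
    exact (hs.2 : φ s ≤ φ s₀).trans (hmin hr)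
  rw [hset]
  exact hK.of_isClosed_subset (hφ.preimage_isClosed_of_isClosed hK.isClosed isClosed_Iic)
    inter_subset_left

noncomputable def tiltedPrimitive (f : ℝ → ℝ) (a s : ℝ) : ℝ := (∫ t in (0 : ℝ)..s, f t) - a * s

noncomputable def lastArgmin (f : ℝ → ℝ) (x a : ℝ) : ℝ :=
  sSup {s ∈ Icc 0 x | IsMinOn (tiltedPrimitive f a) (Icc 0 x) s}

section LastArgmin

variable {f : ℝ → ℝ} {M a x u v : ℝ}

theorem tiltedPrimitive_sub_tiltedPrimitive (hf : ContinuousOn f (Icc 0 1)) (hu : u ∈ Icc 0 1)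
    (hv : v ∈ Icc 0 1) :
    tiltedPrimitive f a v - tiltedPrimitive f a u = (∫ t in u..v, f t) - a * (v - u) := by
  have hint : ∀ y ∈ Icc (0 : ℝ) 1, IntervalIntegrable f volume 0 y := fun y hy =>
    (hf.mono (uIcc_subset_Icc (left_mem_Icc.2 zero_le_one) hy)).intervalIntegrable
  rw [tiltedPrimitive, tiltedPrimitive,
    ← intervalIntegral.integral_interval_sub_left (hint v hv) (hint u hu)]
  ring

theorem abs_integral_le_mul_sub (hM : ∀ t ∈ Icc 0 1, |f t| ≤ M) (hu : 0 ≤ u) (huv : u ≤ v)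
    (hv : v ≤ 1) : |∫ t in u..v, f t| ≤ M * (v - u) := by
  have h := intervalIntegral.norm_integral_le_of_norm_le_const (C := M) (a := u) (b := v)
    (f := f) fun t ht => hM t (Ioc_subset_Icc_self ((uIoc_of_le huv ▸ Ioc_subset_Ioc hu hv) ht))
  rwa [abs_of_nonneg (sub_nonneg.2 huv)] at h

theorem continuousOn_tiltedPrimitive (hf : ContinuousOn f (Icc 0 1)) (a : ℝ) :
    ContinuousOn (tiltedPrimitive f a) (Icc 0 1) := by
  have h := intervalIntegral.continuousOn_primitive_interval (μ := volume) (a := 0) (b := 1)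
    (hf.mono (uIcc_of_le zero_le_one).subset).integrableOn_Icc
  rw [uIcc_of_le zero_le_one] at h
  exact h.sub (continuousOn_const.mul continuousOn_id)

theorem lastArgmin_spec (hf : ContinuousOn f (Icc 0 1)) (hx : x ∈ Icc 0 1) (a : ℝ) :
    lastArgmin f x a ∈ Icc 0 x ∧ IsMinOn (tiltedPrimitive f a) (Icc 0 x) (lastArgmin f x a) := by
  have hcont := (continuousOn_tiltedPrimitive hf a).mono (Icc_subset_Icc_right hx.2)
  obtain ⟨s, hs, hmin⟩ := isCompact_Icc.exists_isMinOn (nonempty_Icc.2 hx.1) hcont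
  exact (isCompact_setOf_isMinOn isCompact_Icc hcont).sSup_mem ⟨s, hs, hmin⟩

theorem le_lastArgmin {s : ℝ} (hs : s ∈ Icc 0 x)
    (hmin : IsMinOn (tiltedPrimitive f a) (Icc 0 x) s) : s ≤ lastArgmin f x a :=
  le_csSup ⟨x, fun _ h => h.1.2⟩ ⟨hs, hmin⟩

theorem lastArgmin_mono (hf : ContinuousOn f (Icc 0 1)) (hx : x ∈ Icc 0 1) :
    Monotone (lastArgmin f x) := by
  intro a b hab
  obtain ⟨hsa, hmina⟩ := lastArgmin_spec hf hx a
  obtain ⟨hsb, hminb⟩ := lastArgmin_spec hf hx b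
  have h1 := hmina hsb
  have h2 := hminb hsa
  simp only [mem_ofPred_eq, tiltedPrimitive] at h1 h2
  rcases hab.lt_or_eq with hab | rfl
  · nlinarith
  · exact le_rfl

theorem lastArgmin_eq_of_lastArgmin_one_le (hf : ContinuousOn f (Icc 0 1)) (hx : x ∈ Icc 0 1)
    (h : lastArgmin f 1 a ≤ x) : lastArgmin f x a = lastArgmin f 1 a := by
  obtain ⟨hT, hTmin⟩ := lastArgmin_spec hf (right_mem_Icc.2 zero_le_one) (a := a)
  obtain ⟨hs, hsmin⟩ := lastArgmin_spec hf hx a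
  have hIcc : Icc 0 x ⊆ Icc 0 1 := Icc_subset_Icc_right hx.2
  have hTx : lastArgmin f 1 a ∈ Icc 0 x := ⟨hT.1, h⟩
  have hsmin' : IsMinOn (tiltedPrimitive f a) (Icc 0 1) (lastArgmin f x a) :=
    isMinOn_iff.2 fun r hr => (hsmin hTx).trans (hTmin hr)
  exact le_antisymm (le_lastArgmin (hIcc hs) hsmin') (le_lastArgmin hTx (hTmin.on_subset hIcc))

theorem lastArgmin_le_min (hf : ContinuousOn f (Icc 0 1)) (hx : x ∈ Icc 0 1) :
    lastArgmin f x a ≤ min (lastArgmin f 1 a) x := by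
  rcases le_or_gt (lastArgmin f 1 a) x with h | h
  · rw [lastArgmin_eq_of_lastArgmin_one_le hf hx h]
    exact le_min le_rfl h
  · have := (lastArgmin_spec hf hx a).1.2
    exact le_min (this.trans h.le) this

theorem integral_lastArgmin (hf : ContinuousOn f (Icc 0 1)) (hM : ∀ t ∈ Icc 0 1, |f t| ≤ M)
    (hx : x ∈ Icc 0 1) :
    ∫ a in (-M)..M, lastArgmin f x a = M * x - ∫ t in (0 : ℝ)..x, f t := by
  set m : ℝ → ℝ := fun a => tiltedPrimitive f a (lastArgmin f x a)
  have hM0 : 0 ≤ M := (abs_nonneg _).trans (hM 0 (left_mem_Icc.2 zero_le_one))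
  have hIcc : Icc 0 x ⊆ Icc 0 1 := Icc_subset_Icc_right hx.2
  -- Envelope theorem: `m` is concave with slope `-lastArgmin f x a` at `a`.
  have htilt : ∀ a b s, tiltedPrimitive f b s = tiltedPrimitive f a s - (b - a) * s :=
    fun a b s => by simp only [tiltedPrimitive]; ring
  have hlow : ∀ a b, lastArgmin f x a * (b - a) ≤ m a - m b := fun a b => by
    have := (lastArgmin_spec hf hx b).2 (lastArgmin_spec hf hx a).1
    simp only [mem_ofPred_eq] at this
    rw [htilt a b (lastArgmin f x a)] at this
    simp only [m]; linarith
  have hhigh : ∀ a b, m a - m b ≤ lastArgmin f x b * (b - a) := fun a b => by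
    have := (lastArgmin_spec hf hx a).2 (lastArgmin_spec hf hx b).1
    simp only [mem_ofPred_eq] at this
    rw [htilt b a (lastArgmin f x b)] at this
    simp only [m]; linarith
  have hm_neg : m (-M) = 0 := by
    obtain ⟨hs, hmin⟩ := lastArgmin_spec hf hx (-M)
    have h0 : m (-M) ≤ tiltedPrimitive f (-M) 0 := hmin (left_mem_Icc.2 hx.1)
    have h1 := abs_le.1 (abs_integral_le_mul_sub hM le_rfl hs.1 (hIcc hs).2)
    simp only [m, tiltedPrimitive, intervalIntegral.integral_same] at h0 ⊢
    linarith
  have hm_pos : m M = (∫ t in (0 : ℝ)..x, f t) - M * x := by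
    obtain ⟨hs, hmin⟩ := lastArgmin_spec hf hx M
    have h0 : m M ≤ tiltedPrimitive f M x := hmin (right_mem_Icc.2 hx.1)
    have h1 := abs_le.1 (abs_integral_le_mul_sub hM (hIcc hs).1 hs.2 hx.2)
    have h2 := tiltedPrimitive_sub_tiltedPrimitive hf (a := M) (hIcc hs) hx
    simp only [m, tiltedPrimitive] at h0 h2 ⊢
    linarith
  have key := sub_eq_integral_of_mul_sub_le (by linarith : -M ≤ M)
    ((lastArgmin_mono hf hx).monotoneOn _) (fun a _ b _ _ => hlow a b) (fun a _ b _ _ => hhigh a b)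
  rw [← key, hm_neg, hm_pos]
  ring

end LastArgmin

noncomputable def windowSup (f : ℝ → ℝ) (x v : ℝ) : ℝ :=
  sSup {z : ℝ | ∃ u : ℝ, 0 ≤ u ∧ u ≤ x ∧ u < v ∧ z = (v - u)⁻¹ * ∫ t in u..v, f t}

section IsoProj

variable {f : ℝ → ℝ} {M a x v : ℝ}

theorem isoProj_eq_sInf_windowSup :
    isoProj f x = sInf {y : ℝ | ∃ v : ℝ, x ≤ v ∧ v ≤ 1 ∧ y = windowSup f x v} := rfl

theorem inv_sub_mul_integral_mem_Icc (hM : ∀ t ∈ Icc 0 1, |f t| ≤ M) {u : ℝ} (hu : 0 ≤ u)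
    (huv : u < v) (hv : v ≤ 1) : (v - u)⁻¹ * ∫ t in u..v, f t ∈ Icc (-M) M := by
  have hvu : 0 < v - u := sub_pos.2 huv
  rw [mem_Icc, ← abs_le, abs_mul, abs_inv, abs_of_pos hvu, inv_mul_le_iff₀ hvu, mul_comm]
  exact abs_integral_le_mul_sub hM hu huv.le hv

theorem windowSup_le (hx : 0 < x) (hxv : x ≤ v)
    (h : ∀ u, 0 ≤ u → u ≤ x → u < v → (v - u)⁻¹ * ∫ t in u..v, f t ≤ a) : windowSup f x v ≤ a :=
  csSup_le ⟨_, 0, le_rfl, hx.le, hx.trans_le hxv, rfl⟩ fun _ ⟨u, hu, hux, huv, hz⟩ =>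
    hz ▸ h u hu hux huv

theorem le_windowSup (hM : ∀ t ∈ Icc 0 1, |f t| ≤ M) (hv : v ≤ 1) {u : ℝ} (hu : 0 ≤ u)
    (hux : u ≤ x) (huv : u < v) (h : a ≤ (v - u)⁻¹ * ∫ t in u..v, f t) : a ≤ windowSup f x v := by
  refine h.trans (le_csSup ⟨M, ?_⟩ ⟨u, hu, hux, huv, rfl⟩)
  rintro _ ⟨u', hu', -, huv', rfl⟩
  exact (inv_sub_mul_integral_mem_Icc hM hu' huv' hv).2

theorem neg_le_windowSup (hM : ∀ t ∈ Icc 0 1, |f t| ≤ M) (hx : 0 < x) (hxv : x ≤ v)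
    (hv : v ≤ 1) : -M ≤ windowSup f x v :=
  le_windowSup hM hv le_rfl hx.le (hx.trans_le hxv)
    (inv_sub_mul_integral_mem_Icc hM le_rfl (hx.trans_le hxv) hv).1

theorem isoProj_le_windowSup (hM : ∀ t ∈ Icc 0 1, |f t| ≤ M) (hx : 0 < x) (hxv : x ≤ v)
    (hv : v ≤ 1) : isoProj f x ≤ windowSup f x v := by
  rw [isoProj_eq_sInf_windowSup]
  refine csInf_le ⟨-M, ?_⟩ ⟨v, hxv, hv, rfl⟩
  rintro _ ⟨v', hxv', hv', rfl⟩
  exact neg_le_windowSup hM hx hxv' hv'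

theorem le_isoProj_of_forall_le_windowSup (hx : x ≤ 1)
    (h : ∀ v, x ≤ v → v ≤ 1 → a ≤ windowSup f x v) :
    a ≤ isoProj f x := by
  rw [isoProj_eq_sInf_windowSup]
  exact le_csInf ⟨_, 1, hx, le_rfl, rfl⟩ fun _ ⟨v, hxv, hv, hy⟩ => hy ▸ h v hxv hv

-- At `x = 0` the window `v = 0` is empty and contributes the junk value `sSup ∅ = 0`, which is
-- why everything about `isoProj` is stated on `Ioc 0 1`.
theorem isoProj_mem_Icc (hM : ∀ t ∈ Icc 0 1, |f t| ≤ M) (hx : x ∈ Ioc 0 1) :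
    isoProj f x ∈ Icc (-M) M :=
  ⟨le_isoProj_of_forall_le_windowSup hx.2 fun _ hxv hv => neg_le_windowSup hM hx.1 hxv hv,
    (isoProj_le_windowSup hM hx.1 hx.2 le_rfl).trans <| windowSup_le hx.1 hx.2
      fun _ hu _ huv => (inv_sub_mul_integral_mem_Icc hM hu huv le_rfl).2⟩

theorem isoProj_le_of_le_lastArgmin (hf : ContinuousOn f (Icc 0 1))
    (hM : ∀ t ∈ Icc 0 1, |f t| ≤ M) (hx : x ∈ Ioc 0 1) (h : x ≤ lastArgmin f 1 a) :
    isoProj f x ≤ a := by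
  obtain ⟨hv, hmin⟩ := lastArgmin_spec hf (right_mem_Icc.2 zero_le_one) a
  refine (isoProj_le_windowSup hM hx.1 h hv.2).trans (windowSup_le hx.1 h fun u hu hux huv => ?_)
  have hu1 : u ∈ Icc (0 : ℝ) 1 := ⟨hu, hux.trans hx.2⟩
  have hsub := tiltedPrimitive_sub_tiltedPrimitive hf (a := a) hu1 hv
  have hle : tiltedPrimitive f a (lastArgmin f 1 a) ≤ tiltedPrimitive f a u := hmin hu1
  rw [inv_mul_le_iff₀ (sub_pos.2 huv)]
  linarith

theorem le_isoProj_of_lastArgmin_lt (hf : ContinuousOn f (Icc 0 1))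
    (hM : ∀ t ∈ Icc 0 1, |f t| ≤ M) (hx : x ∈ Ioc 0 1) (h : lastArgmin f 1 a < x) :
    a ≤ isoProj f x := by
  obtain ⟨hu, hmin⟩ := lastArgmin_spec hf (right_mem_Icc.2 zero_le_one) a
  refine le_isoProj_of_forall_le_windowSup hx.2 fun v hxv hv =>
    le_windowSup hM hv hu.1 h.le (h.trans_le hxv) ?_
  have hv1 : v ∈ Icc (0 : ℝ) 1 := ⟨hx.1.le.trans hxv, hv⟩
  have hsub := tiltedPrimitive_sub_tiltedPrimitive hf (a := a) hu hv1
  have hle : tiltedPrimitive f a (lastArgmin f 1 a) ≤ tiltedPrimitive f a v := hmin hv1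
  rw [le_inv_mul_iff₀ (sub_pos.2 (h.trans_le hxv))]
  linarith

theorem isoProj_monotoneOn (hf : ContinuousOn f (Icc 0 1)) (hM : ∀ t ∈ Icc 0 1, |f t| ≤ M) :
    MonotoneOn (isoProj f) (Ioc 0 1) := by
  intro x hx y hy hxy
  by_contra! hlt
  obtain ⟨a, hya, hax⟩ := exists_between hlt
  have hTx : lastArgmin f 1 a < x :=
    lt_of_not_ge fun hle => (isoProj_le_of_le_lastArgmin hf hM hx hle).not_gt hax
  exact (le_isoProj_of_lastArgmin_lt hf hM hy (hTx.trans_le hxy)).not_gt hya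

theorem memLp_isoProj (hf : ContinuousOn f (Icc 0 1)) (hM : ∀ t ∈ Icc 0 1, |f t| ≤ M)
    (p : ENNReal) : MemLp (isoProj f) p (volume.restrict (Ioc 0 1)) :=
  memLp_of_bounded (ae_restrict_of_forall_mem measurableSet_Ioc fun _ => isoProj_mem_Icc hM)
    (aemeasurable_restrict_of_monotoneOn measurableSet_Ioc
      (isoProj_monotoneOn hf hM)).aestronglyMeasurable p

theorem setOf_lt_isoProj_ae_eq (hf : ContinuousOn f (Icc 0 1))
    (hM : ∀ t ∈ Icc 0 1, |f t| ≤ M) :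
    ∀ᵐ c, {t | c < isoProj f t} =ᵐ[volume.restrict (Ioc 0 1)] Ioi (lastArgmin f 1 c) := by
  have hcount := Measure.countable_meas_level_set_pos₀ (μ := volume.restrict (Ioc 0 1))
    (aemeasurable_restrict_of_monotoneOn measurableSet_Ioc
      (isoProj_monotoneOn hf hM)).nullMeasurable
  filter_upwards [hcount.ae_notMem volume] with c hc
  have hlevel : ∀ᵐ t ∂(volume.restrict (Ioc 0 1)), isoProj f t ≠ c :=
    measure_eq_zero_iff_ae_notMem.1 (nonpos_iff_eq_zero.1 (not_lt.1 hc))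
  rw [Filter.eventuallyEq_set]
  filter_upwards [hlevel, ae_restrict_mem measurableSet_Ioc] with t hne ht
  refine ⟨fun hct => mem_Ioi.2 (lt_of_not_ge fun hle => ?_), fun hlt => ?_⟩
  · exact (isoProj_le_of_le_lastArgmin hf hM ht hle).not_gt hct
  · exact (le_isoProj_of_lastArgmin_lt hf hM ht hlt).lt_of_ne (Ne.symm hne)

end IsoProj

section Gap

variable {f : ℝ → ℝ} {M x : ℝ}

theorem integrableOn_isoProj (hf : ContinuousOn f (Icc 0 1)) (hM : ∀ t ∈ Icc 0 1, |f t| ≤ M) :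
    IntegrableOn (isoProj f) (Ioc 0 1) :=
  (memLp_isoProj hf hM 1).integrable le_rfl

theorem integrableOn_sub_isoProj (hf : ContinuousOn f (Icc 0 1))
    (hM : ∀ t ∈ Icc 0 1, |f t| ≤ M) : IntegrableOn (fun t => f t - isoProj f t) (Ioc 0 1) :=
  ((hf.integrableOn_Icc).mono_set Ioc_subset_Icc_self).sub (integrableOn_isoProj hf hM)

theorem integral_isoProj (hf : ContinuousOn f (Icc 0 1)) (hM : ∀ t ∈ Icc 0 1, |f t| ≤ M)
    (hx : x ∈ Icc 0 1) :
    ∫ t in (0 : ℝ)..x, isoProj f t = M * x - ∫ a in (-M)..M, min (lastArgmin f 1 a) x := by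
  have hM0 : 0 ≤ M := (abs_nonneg _).trans (hM 0 (left_mem_Icc.2 zero_le_one))
  have hsub : Ioc 0 x ⊆ Ioc (0 : ℝ) 1 := Ioc_subset_Ioc_right hx.2
  have hint : IntegrableOn (isoProj f) (Ioc 0 x) := (integrableOn_isoProj hf hM).mono_set hsub
  have hlayer := integral_mul_sub_eq_integral_setIntegral_lt (μ := volume.restrict (Ioc 0 x))
    (h := fun _ => (1 : ℝ)) (g := isoProj f) (by linarith : -M ≤ M) (integrable_const 1)
    (aemeasurable_restrict_of_monotoneOn measurableSet_Ioc
      ((isoProj_monotoneOn hf hM).mono hsub))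
    (ae_restrict_of_forall_mem measurableSet_Ioc fun t ht => isoProj_mem_Icc hM (hsub ht))
  have hlevel : ∀ᵐ c,
      ∫ t in {t | c < isoProj f t}, (1 : ℝ) ∂(volume.restrict (Ioc 0 x)) =
        x - min (lastArgmin f 1 c) x := by
    filter_upwards [setOf_lt_isoProj_ae_eq hf hM] with c hc
    have hT := (lastArgmin_spec hf (right_mem_Icc.2 zero_le_one) c).1.1
    rw [setIntegral_const, smul_eq_mul, mul_one,
      measureReal_congr (ae_restrict_of_ae_restrict_of_subset hsub hc),
      measureReal_restrict_apply measurableSet_Ioi, inter_comm, Ioc_inter_Ioi,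
      sup_eq_right.2 hT, Real.volume_real_Ioc]
    rcases le_total (lastArgmin f 1 c) x with h | h
    · rw [min_eq_left h, max_eq_left (sub_nonneg.2 h)]
    · rw [min_eq_right h, max_eq_right (sub_nonpos.2 h), sub_self]
  rw [intervalIntegral.integral_congr_ae (hlevel.mono fun c hc _ => hc),
    intervalIntegral.integral_sub intervalIntegrable_const
      ((lastArgmin_mono hf (right_mem_Icc.2 zero_le_one)).min
        monotone_const).intervalIntegrable] at hlayer
  simp only [one_mul, sub_neg_eq_add, intervalIntegral.integral_const, smul_eq_mul] at hlayer
  rw [integral_add hint (integrable_const M), integral_const, smul_eq_mul,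
    measureReal_restrict_apply_univ, Real.volume_real_Ioc, max_eq_left (sub_nonneg.2 hx.1)]
    at hlayer
  rw [intervalIntegral.integral_of_le hx.1]
  linarith

theorem integral_sub_isoProj (hf : ContinuousOn f (Icc 0 1)) (hM : ∀ t ∈ Icc 0 1, |f t| ≤ M)
    (hx : x ∈ Icc 0 1) :
    ∫ t in (0 : ℝ)..x, (f t - isoProj f t) =
      ∫ a in (-M)..M, (min (lastArgmin f 1 a) x - lastArgmin f x a) := by
  have hsub : Ioc 0 x ⊆ Ioc (0 : ℝ) 1 := Ioc_subset_Ioc_right hx.2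
  rw [intervalIntegral.integral_sub
      ((hf.mono (uIcc_subset_Icc (left_mem_Icc.2 zero_le_one) hx)).intervalIntegrable)
      ((intervalIntegrable_iff_integrableOn_Ioc_of_le hx.1).2
        ((integrableOn_isoProj hf hM).mono_set hsub)),
    intervalIntegral.integral_sub ((lastArgmin_mono hf (right_mem_Icc.2 zero_le_one)).min
      monotone_const).intervalIntegrable (lastArgmin_mono hf hx).intervalIntegrable,
    integral_isoProj hf hM hx, integral_lastArgmin hf hM hx]
  ring

theorem integral_sub_isoProj_nonneg (hf : ContinuousOn f (Icc 0 1))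
    (hM : ∀ t ∈ Icc 0 1, |f t| ≤ M) (hx : x ∈ Icc 0 1) :
    0 ≤ ∫ t in (0 : ℝ)..x, (f t - isoProj f t) := by
  have hM0 : 0 ≤ M := (abs_nonneg _).trans (hM 0 (left_mem_Icc.2 zero_le_one))
  rw [integral_sub_isoProj hf hM hx]
  exact intervalIntegral.integral_nonneg (by linarith) fun a _ =>
    sub_nonneg.2 (lastArgmin_le_min hf hx)

theorem integral_sub_isoProj_one (hf : ContinuousOn f (Icc 0 1))
    (hM : ∀ t ∈ Icc 0 1, |f t| ≤ M) : ∫ t in (0 : ℝ)..1, (f t - isoProj f t) = 0 := by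
  rw [integral_sub_isoProj hf hM (right_mem_Icc.2 zero_le_one)]
  refine (intervalIntegral.integral_congr fun a _ => ?_).trans intervalIntegral.integral_zero
  simp only [min_eq_left (lastArgmin_spec hf (right_mem_Icc.2 zero_le_one) a).1.2, sub_self]

theorem integral_sub_isoProj_lastArgmin (hf : ContinuousOn f (Icc 0 1))
    (hM : ∀ t ∈ Icc 0 1, |f t| ≤ M) (c : ℝ) :
    ∫ t in (0 : ℝ)..lastArgmin f 1 c, (f t - isoProj f t) = 0 := by
  obtain ⟨hx, hmin⟩ := lastArgmin_spec hf (right_mem_Icc.2 zero_le_one) c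
  rw [integral_sub_isoProj hf hM hx]
  refine (intervalIntegral.integral_congr fun a _ => ?_).trans intervalIntegral.integral_zero
  rcases le_total a c with hac | hca
  · have h := lastArgmin_mono hf (right_mem_Icc.2 zero_le_one) hac
    rw [lastArgmin_eq_of_lastArgmin_one_le hf hx h, min_eq_left h, sub_self]
  · have h := lastArgmin_mono hf (right_mem_Icc.2 zero_le_one) hca
    rw [min_eq_right h, sub_eq_zero, eq_comm]
    refine le_antisymm (lastArgmin_spec hf hx a).1.2
      (le_lastArgmin (right_mem_Icc.2 hx.1) (isMinOn_iff.2 fun r hr => ?_))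
    have hr1 : r ∈ Icc (0 : ℝ) 1 := ⟨hr.1, hr.2.trans hx.2⟩
    have h1 : tiltedPrimitive f c (lastArgmin f 1 c) ≤ tiltedPrimitive f c r := hmin hr1
    have h2 := tiltedPrimitive_sub_tiltedPrimitive hf (a := c) hr1 hx
    have h3 := tiltedPrimitive_sub_tiltedPrimitive hf (a := a) hr1 hx
    nlinarith [hr.2]

theorem setIntegral_Ioi_sub_isoProj (hf : ContinuousOn f (Icc 0 1))
    (hM : ∀ t ∈ Icc 0 1, |f t| ≤ M) {s : ℝ} (hs : s ∈ Icc 0 1) :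
    ∫ t in Ioi s, (f t - isoProj f t) ∂(volume.restrict (Ioc 0 1)) =
      -∫ t in (0 : ℝ)..s, (f t - isoProj f t) := by
  have hint : ∀ y ∈ Icc (0 : ℝ) 1, IntervalIntegrable (fun t => f t - isoProj f t) volume 0 y :=
    fun y hy => (intervalIntegrable_iff_integrableOn_Ioc_of_le hy.1).2
      ((integrableOn_sub_isoProj hf hM).mono_set (Ioc_subset_Ioc_right hy.2))
  rw [Measure.restrict_restrict measurableSet_Ioi, inter_comm, Ioc_inter_Ioi, sup_eq_right.2 hs.1,
    ← intervalIntegral.integral_of_le hs.2, ← intervalIntegral.integral_interval_sub_left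
      (hint 1 (right_mem_Icc.2 zero_le_one)) (hint s hs), integral_sub_isoProj_one hf hM, zero_sub]

end Gap

section Orthogonality

variable {f : ℝ → ℝ} {M : ℝ}

theorem integral_sub_isoProj_mul_nonpos (hf : ContinuousOn f (Icc 0 1))
    (hM : ∀ t ∈ Icc 0 1, |f t| ≤ M) {g : ℝ → ℝ} (hg : MonotoneOn g (Ioc 0 1)) {b B : ℝ}
    (hbB : b ≤ B) (hgb : ∀ t ∈ Ioc 0 1, g t ∈ Icc b B) :
    ∫ t in Ioc 0 1, (f t - isoProj f t) * (g t - b) ≤ 0 := by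
  rw [integral_mul_sub_eq_integral_setIntegral_lt hbB (integrableOn_sub_isoProj hf hM)
    (aemeasurable_restrict_of_monotoneOn measurableSet_Ioc hg)
    (ae_restrict_of_forall_mem measurableSet_Ioc hgb), intervalIntegral.integral_of_le hbB]
  refine setIntegral_nonpos measurableSet_Ioc fun c _ => ?_
  obtain ⟨s, hs, hae⟩ := hg.exists_setOf_lt_ae_eq_Ioi zero_le_one c
  rw [setIntegral_congr_set hae, setIntegral_Ioi_sub_isoProj hf hM hs, neg_nonpos]
  exact integral_sub_isoProj_nonneg hf hM hs

theorem integral_sub_isoProj_mul_isoProj_sub (hf : ContinuousOn f (Icc 0 1))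
    (hM : ∀ t ∈ Icc 0 1, |f t| ≤ M) {b : ℝ} (hb : b ≤ -M) :
    ∫ t in Ioc 0 1, (f t - isoProj f t) * (isoProj f t - b) = 0 := by
  have hM0 : 0 ≤ M := (abs_nonneg _).trans (hM 0 (left_mem_Icc.2 zero_le_one))
  rw [integral_mul_sub_eq_integral_setIntegral_lt (B := M) (by linarith)
    (integrableOn_sub_isoProj hf hM) (aemeasurable_restrict_of_monotoneOn measurableSet_Ioc
      (isoProj_monotoneOn hf hM)) (ae_restrict_of_forall_mem measurableSet_Ioc fun t ht =>
        Icc_subset_Icc_left hb (isoProj_mem_Icc hM ht))]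
  refine (intervalIntegral.integral_congr_ae ?_).trans intervalIntegral.integral_zero
  filter_upwards [setOf_lt_isoProj_ae_eq hf hM] with c hc _
  rw [setIntegral_congr_set hc, setIntegral_Ioi_sub_isoProj hf hM
    (lastArgmin_spec hf (right_mem_Icc.2 zero_le_one) c).1,
    integral_sub_isoProj_lastArgmin hf hM, neg_zero]

theorem integral_sub_isoProj_mul_isoProj_sub_nonneg (hf : ContinuousOn f (Icc 0 1))
    (hM : ∀ t ∈ Icc 0 1, |f t| ≤ M) {g : ℝ → ℝ} (hg : MonotoneOn g (Icc 0 1)) :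
    0 ≤ ∫ t in Ioc 0 1, (f t - isoProj f t) * (isoProj f t - g t) := by
  have hM0 : 0 ≤ M := (abs_nonneg _).trans (hM 0 (left_mem_Icc.2 zero_le_one))
  set b := min (-M) (g 0)
  set B := max M (g 1)
  have hgb : ∀ t ∈ Ioc 0 1, g t ∈ Icc b B := fun t ht =>
    ⟨(min_le_right _ _).trans (hg (left_mem_Icc.2 zero_le_one) (Ioc_subset_Icc_self ht) ht.1.le),
      (hg (Ioc_subset_Icc_self ht) (right_mem_Icc.2 zero_le_one) ht.2).trans (le_max_right _ _)⟩
  have hPb : ∀ t ∈ Ioc 0 1, isoProj f t ∈ Icc b B := fun t ht =>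
    Icc_subset_Icc (min_le_left _ _) (le_max_left _ _) (isoProj_mem_Icc hM ht)
  have hintegrable : ∀ φ : ℝ → ℝ, AEStronglyMeasurable φ (volume.restrict (Ioc 0 1)) →
      (∀ t ∈ Ioc 0 1, φ t ∈ Icc b B) →
      Integrable (fun t => (f t - isoProj f t) * (φ t - b)) (volume.restrict (Ioc 0 1)) :=
    fun φ hφ hφb => (integrableOn_sub_isoProj hf hM).mul_of_top_left
      (memLp_of_bounded (a := 0) (b := B - b) (ae_restrict_of_forall_mem measurableSet_Ioc
        fun t ht => ⟨sub_nonneg.2 (hφb t ht).1, sub_le_sub_right (hφb t ht).2 b⟩)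
        (hφ.sub aestronglyMeasurable_const) ⊤)
  have hP := integral_sub_isoProj_mul_isoProj_sub hf hM (min_le_left (-M) (g 0))
  have hG := integral_sub_isoProj_mul_nonpos hf hM (hg.mono Ioc_subset_Icc_self)
    (by linarith [min_le_left (-M) (g 0), le_max_left M (g 1)]) hgb
  have hsplit := integral_sub (hintegrable _ (memLp_isoProj hf hM 1).aestronglyMeasurable hPb)
    (hintegrable _ (aemeasurable_restrict_of_monotoneOn measurableSet_Ioc
      (hg.mono Ioc_subset_Icc_self)).aestronglyMeasurable hgb)
  simp only [← mul_sub, sub_sub_sub_cancel_right] at hsplit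
  linarith

end Orthogonality

/-- The isotonic projection `P_w` minimizes the `L²` distance to `w` over the set of
continuous nondecreasing functions on `[0,1]`. -/
theorem isoProj_minimizes (w : ℝ → ℝ) (hw : ContinuousOn w (Icc 0 1)) :
    ∀ F : ℝ → ℝ, ContinuousOn F (Icc 0 1) → MonotoneOn F (Icc 0 1) →
      ∫ t in (0:ℝ)..1, (w t - isoProj w t) ^ 2 ≤ ∫ t in (0:ℝ)..1, (w t - F t) ^ 2 := by
  intro F _ hF
  obtain ⟨M, hM⟩ := isCompact_Icc.exists_bound_of_continuousOn hw
  have hw_memLp : MemLp w 2 (volume.restrict (Ioc 0 1)) :=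
    memLp_of_bounded (a := -M) (b := M) (ae_restrict_of_forall_mem measurableSet_Ioc fun t ht =>
      abs_le.1 (hM t (Ioc_subset_Icc_self ht)))
      ((hw.mono Ioc_subset_Icc_self).aestronglyMeasurable measurableSet_Ioc) 2
  have hF_memLp : MemLp F 2 (volume.restrict (Ioc 0 1)) :=
    (hF.memLp_isCompact isCompact_Icc).mono_measure
      (Measure.restrict_mono Ioc_subset_Icc_self le_rfl)
  simp only [intervalIntegral.integral_of_le zero_le_one]
  exact integral_sq_sub_le_of_integral_mul_nonneg hw_memLp (memLp_isoProj hw hM 2) hF_memLp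
    (integral_sub_isoProj_mul_isoProj_sub_nonneg hw hM hF)
end

section
/- Let w1, w2 : [0,1]² → ℝ be continuous, and let P_{w1}, P_{w2} denote their projections onto the cone M[0,1]² of monotone surfaces, i.e., the minimizers of ∫_0^1 ∫_0^1 (w_i(s,t) − F(s,t))² ds dt over F ∈ M[0,1]². Then sup_{(s,t) ∈ [0,1]²} |P_{w1}(s,t) − P_{w2}(s,t)| ≤ sup_{(s,t) ∈ [0,1]²} |w1(s,t) − w2(s,t)|. -/
open MeasureTheory Set

/-- `F` is monotone on `[0,1]²` with respect to the coordinatewise partial ordering. -/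
def MonoSurf (F : ℝ × ℝ → ℝ) : Prop :=
  ∀ s₁ ∈ Icc (0:ℝ) 1, ∀ s₂ ∈ Icc (0:ℝ) 1, ∀ t₁ ∈ Icc (0:ℝ) 1, ∀ t₂ ∈ Icc (0:ℝ) 1,
    s₁ ≤ s₂ → t₁ ≤ t₂ → F (s₁, t₁) ≤ F (s₂, t₂)

/-!
Let `δ` bound `w₁ - w₂` on the square and put `e = (P₁ - P₂ - δ)⁺`. The functions
`P₁ - e = min P₁ (P₂ + δ)` and `P₂ + e = max P₂ (P₁ - δ)` are monotone, hence so are the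
midpoints `P₁ - e / 2` and `P₂ + e / 2`. Using them as competitors for `w₁` and `w₂` lowers the
sum of the two squared residuals pointwise by at least `e ² / 2`, while optimality of `P₁` and
`P₂` says the sum of the two integrals cannot decrease. So `∫ e ² = 0`, and by continuity
`e = 0` on the square, i.e. `P₁ - P₂ ≤ δ`; exchanging the roles gives `|P₁ - P₂| ≤ δ`.
-/

theorem intervalIntegral_intervalIntegral_eq_setIntegral_Icc_prod {E : Type*}
    [NormedAddCommGroup E] [NormedSpace ℝ E] {f : ℝ × ℝ → E} {a b c d : ℝ}
    (hab : a ≤ b) (hcd : c ≤ d) (hf : IntegrableOn f (Icc a b ×ˢ Icc c d)) :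
    ∫ s in a..b, ∫ t in c..d, f (s, t) = ∫ p in Icc a b ×ˢ Icc c d, f p := by
  rw [Measure.volume_eq_prod] at hf ⊢
  rw [setIntegral_prod f hf, intervalIntegral.integral_of_le hab,
    ← integral_Icc_eq_integral_Ioc]
  refine setIntegral_congr_fun measurableSet_Icc fun s _ => ?_
  rw [intervalIntegral.integral_of_le hcd, integral_Icc_eq_integral_Ioc]

theorem ContinuousOn.eqOn_zero_of_setIntegral_eq_zero {X : Type*} [TopologicalSpace X]
    [MeasurableSpace X] [OpensMeasurableSpace X] {μ : Measure X} [μ.IsOpenPosMeasure]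
    {s : Set X} {f : X → ℝ} (hs : s ⊆ closure (interior s)) (hsm : MeasurableSet s)
    (hf : ContinuousOn f s) (hfi : IntegrableOn f s μ) (hf₀ : ∀ x ∈ s, 0 ≤ f x)
    (hint : ∫ x in s, f x ∂μ = 0) : EqOn f 0 s :=
  μ.eqOn_of_ae_eq
    ((setIntegral_eq_zero_iff_of_nonneg_ae (ae_restrict_of_forall_mem hsm hf₀) hfi).1 hint)
    hf continuousOn_const hs

/-- With `e = (p - q - δ)⁺` the two midpoints are `p - e / 2` and `q + e / 2`; the cross term
`e * ((a - b) - (p - q))` is at most `-e ^ 2` because `p - q = δ + e` wherever `e > 0`. -/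
theorem sq_sub_add_sq_sub_add_half_sq_le {a b p q δ : ℝ} (h : a - b ≤ δ) :
    (a - (p + min p (q + δ)) / 2) ^ 2 + (b - (q + max q (p - δ)) / 2) ^ 2
      + max (p - q - δ) 0 ^ 2 / 2 ≤ (a - p) ^ 2 + (b - q) ^ 2 := by
  rcases le_total (p - q - δ) 0 with hle | hge
  · rw [min_eq_left (by linarith), max_eq_left (by linarith), max_eq_right hle]
    nlinarith
  · rw [min_eq_right (by linarith), max_eq_right (by linarith), max_eq_left hge]
    nlinarith

local notation "□" => SProd.sprod (Icc (0:ℝ) 1) (Icc (0:ℝ) 1)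

theorem monoSurf_iff_monotoneOn {F : ℝ × ℝ → ℝ} : MonoSurf F ↔ MonotoneOn F □ :=
  ⟨fun h ⟨_, _⟩ ⟨hs₁, ht₁⟩ ⟨_, _⟩ ⟨hs₂, ht₂⟩ ⟨hs, ht⟩ => h _ hs₁ _ hs₂ _ ht₁ _ ht₂ hs ht,
   fun h _ hs₁ _ hs₂ _ ht₁ _ ht₂ hs ht => h ⟨hs₁, ht₁⟩ ⟨hs₂, ht₂⟩ ⟨hs, ht⟩⟩

theorem unitSquare_subset_closure_interior : □ ⊆ closure (interior □) := by
  rw [interior_prod_eq, closure_prod_eq, closure_interior_Icc zero_ne_one]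

theorem ContinuousOn.integrableOn_unitSquare {f : ℝ × ℝ → ℝ} (hf : ContinuousOn f □) :
    IntegrableOn f □ :=
  hf.integrableOn_compact (isCompact_Icc.prod isCompact_Icc)

def IsMonoProjection (w P : ℝ × ℝ → ℝ) : Prop :=
  ContinuousOn P □ ∧ MonoSurf P ∧ ∀ F : ℝ × ℝ → ℝ, ContinuousOn F □ → MonoSurf F →
    ∫ s in (0:ℝ)..1, ∫ t in (0:ℝ)..1, (w (s, t) - P (s, t)) ^ 2 ≤
      ∫ s in (0:ℝ)..1, ∫ t in (0:ℝ)..1, (w (s, t) - F (s, t)) ^ 2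

theorem IsMonoProjection.setIntegral_sq_le {w P F : ℝ × ℝ → ℝ} (hP : IsMonoProjection w P)
    (hw : ContinuousOn w □) (hFc : ContinuousOn F □) (hFm : MonoSurf F) :
    ∫ p in □, (w p - P p) ^ 2 ≤ ∫ p in □, (w p - F p) ^ 2 := by
  have hsq : ∀ G : ℝ × ℝ → ℝ, ContinuousOn G □ →
      ∫ s in (0:ℝ)..1, ∫ t in (0:ℝ)..1, (w (s, t) - G (s, t)) ^ 2 =
        ∫ p in □, (w p - G p) ^ 2 := fun G hG =>
    intervalIntegral_intervalIntegral_eq_setIntegral_Icc_prod zero_le_one zero_le_one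
      ((hw.sub hG).pow 2).integrableOn_unitSquare
  rw [← hsq P hP.1, ← hsq F hFc]
  exact hP.2.2 F hFc hFm

section Contraction

variable {w₁ w₂ P₁ P₂ : ℝ × ℝ → ℝ} {δ : ℝ}

theorem IsMonoProjection.setIntegral_sq_excess_nonpos
    (hw₁ : ContinuousOn w₁ □) (hw₂ : ContinuousOn w₂ □)
    (hP₁ : IsMonoProjection w₁ P₁) (hP₂ : IsMonoProjection w₂ P₂)
    (hδ : ∀ p ∈ □, w₁ p - w₂ p ≤ δ) :
    ∫ p in □, max (P₁ p - P₂ p - δ) 0 ^ 2 / 2 ≤ 0 := by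
  have hP₁c := hP₁.1
  have hP₂c := hP₂.1
  have hP₁m := monoSurf_iff_monotoneOn.1 hP₁.2.1
  have hP₂m := monoSurf_iff_monotoneOn.1 hP₂.2.1
  have halve : Monotone fun x : ℝ => x / 2 := monotone_id.div_const zero_le_two
  set M := fun p => (P₁ p + min (P₁ p) (P₂ p + δ)) / 2
  set N := fun p => (P₂ p + max (P₂ p) (P₁ p - δ)) / 2
  have hMm : MonoSurf M := monoSurf_iff_monotoneOn.2 <|
    halve.comp_monotoneOn (hP₁m.add (hP₁m.min (hP₂m.add_const δ)))
  have hNm : MonoSurf N := monoSurf_iff_monotoneOn.2 <|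
    halve.comp_monotoneOn (hP₂m.add (hP₂m.max (hP₁m.add_const (-δ))))
  have hMc : ContinuousOn M □ := by fun_prop
  have hNc : ContinuousOn N □ := by fun_prop
  calc ∫ p in □, max (P₁ p - P₂ p - δ) 0 ^ 2 / 2
      ≤ ∫ p in □, (((w₁ p - P₁ p) ^ 2 - (w₁ p - M p) ^ 2)
          + ((w₂ p - P₂ p) ^ 2 - (w₂ p - N p) ^ 2)) := by
        refine setIntegral_mono_on ?_ ?_ (measurableSet_Icc.prod measurableSet_Icc)
          fun p hp => ?_
        · apply ContinuousOn.integrableOn_unitSquare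
          fun_prop
        · apply ContinuousOn.integrableOn_unitSquare
          fun_prop
        · simp only [M, N]
          linarith [sq_sub_add_sq_sub_add_half_sq_le (p := P₁ p) (q := P₂ p) (hδ p hp)]
    _ = ((∫ p in □, (w₁ p - P₁ p) ^ 2) - ∫ p in □, (w₁ p - M p) ^ 2)
          + ((∫ p in □, (w₂ p - P₂ p) ^ 2) - ∫ p in □, (w₂ p - N p) ^ 2) := by
        rw [integral_add, integral_sub, integral_sub] <;>
          exact ContinuousOn.integrableOn_unitSquare (by fun_prop)
    _ ≤ 0 := add_nonpos (sub_nonpos.2 (hP₁.setIntegral_sq_le hw₁ hMc hMm))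
        (sub_nonpos.2 (hP₂.setIntegral_sq_le hw₂ hNc hNm))

theorem IsMonoProjection.sub_le_of_sub_le
    (hw₁ : ContinuousOn w₁ □) (hw₂ : ContinuousOn w₂ □)
    (hP₁ : IsMonoProjection w₁ P₁) (hP₂ : IsMonoProjection w₂ P₂)
    (hδ : ∀ p ∈ □, w₁ p - w₂ p ≤ δ) : ∀ p ∈ □, P₁ p - P₂ p ≤ δ := by
  have hS : MeasurableSet □ := measurableSet_Icc.prod measurableSet_Icc
  have hP₁c := hP₁.1
  have hP₂c := hP₂.1
  have hc : ContinuousOn (fun p => max (P₁ p - P₂ p - δ) 0 ^ 2 / 2) □ := by fun_prop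
  have hzero : EqOn (fun p => max (P₁ p - P₂ p - δ) 0 ^ 2 / 2) 0 □ :=
    hc.eqOn_zero_of_setIntegral_eq_zero unitSquare_subset_closure_interior hS
      hc.integrableOn_unitSquare (fun p _ => by positivity)
      (le_antisymm (hP₁.setIntegral_sq_excess_nonpos hw₁ hw₂ hP₂ hδ)
        (setIntegral_nonneg hS fun p _ => by positivity))
  intro p hp
  have : max (P₁ p - P₂ p - δ) 0 = 0 := by simpa using hzero hp
  linarith [le_max_left (P₁ p - P₂ p - δ) 0]

end Contraction

/-- The projection onto the cone of monotone surfaces is a contraction with respect to the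
supremum norm on `[0,1]²`: if `P₁, P₂` are the `L²([0,1]²)` projections of continuous
`w₁, w₂` onto `M[0,1]²`, then `sup |P₁ − P₂| ≤ sup |w₁ − w₂|`. -/
theorem surface_projection_sup_contraction
    (w₁ w₂ P₁ P₂ : ℝ × ℝ → ℝ)
    (hw₁ : ContinuousOn w₁ (Icc (0:ℝ) 1 ×ˢ Icc (0:ℝ) 1))
    (hw₂ : ContinuousOn w₂ (Icc (0:ℝ) 1 ×ˢ Icc (0:ℝ) 1))
    (hP₁c : ContinuousOn P₁ (Icc (0:ℝ) 1 ×ˢ Icc (0:ℝ) 1)) (hP₁m : MonoSurf P₁)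
    (hP₂c : ContinuousOn P₂ (Icc (0:ℝ) 1 ×ˢ Icc (0:ℝ) 1)) (hP₂m : MonoSurf P₂)
    (hP₁ : ∀ F : ℝ × ℝ → ℝ, ContinuousOn F (Icc (0:ℝ) 1 ×ˢ Icc (0:ℝ) 1) → MonoSurf F →
      ∫ s in (0:ℝ)..1, ∫ t in (0:ℝ)..1, (w₁ (s, t) - P₁ (s, t)) ^ 2 ≤
        ∫ s in (0:ℝ)..1, ∫ t in (0:ℝ)..1, (w₁ (s, t) - F (s, t)) ^ 2)
    (hP₂ : ∀ F : ℝ × ℝ → ℝ, ContinuousOn F (Icc (0:ℝ) 1 ×ˢ Icc (0:ℝ) 1) → MonoSurf F →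
      ∫ s in (0:ℝ)..1, ∫ t in (0:ℝ)..1, (w₂ (s, t) - P₂ (s, t)) ^ 2 ≤
        ∫ s in (0:ℝ)..1, ∫ t in (0:ℝ)..1, (w₂ (s, t) - F (s, t)) ^ 2) :
    ⨆ p : (Icc (0:ℝ) 1 ×ˢ Icc (0:ℝ) 1 : Set (ℝ × ℝ)), |P₁ p - P₂ p| ≤
      ⨆ p : (Icc (0:ℝ) 1 ×ˢ Icc (0:ℝ) 1 : Set (ℝ × ℝ)), |w₁ p - w₂ p| := by
  have hbdd : BddAbove (range fun p : □ => |w₁ p - w₂ p|) := by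
    rw [← image_eq_range (fun p => |w₁ p - w₂ p|)]
    exact (isCompact_Icc.prod isCompact_Icc).bddAbove_image (hw₁.sub hw₂).abs
  have hδ : ∀ p ∈ □, |w₁ p - w₂ p| ≤ ⨆ p : □, |w₁ p - w₂ p| :=
    fun p hp => le_ciSup hbdd ⟨p, hp⟩
  have h₁₂ := IsMonoProjection.sub_le_of_sub_le hw₁ hw₂ ⟨hP₁c, hP₁m, hP₁⟩ ⟨hP₂c, hP₂m, hP₂⟩
    fun p hp => (abs_sub_le_iff.1 (hδ p hp)).1
  have h₂₁ := IsMonoProjection.sub_le_of_sub_le hw₂ hw₁ ⟨hP₂c, hP₂m, hP₂⟩ ⟨hP₁c, hP₁m, hP₁⟩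
    fun p hp => (abs_sub_le_iff.1 (hδ p hp)).2
  exact Real.iSup_le (fun p => abs_sub_le_iff.2 ⟨h₁₂ p p.2, h₂₁ p p.2⟩)
    (Real.iSup_nonneg fun _ => abs_nonneg _)
end
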